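/- Fix α ∈ ℂ. The automorphism group of the ω-Lie algebra A_α is abelian: for any two automorphisms σ and σ' of A_α, σ ∘ σ' = σ' ∘ σ. -/
import Mathlib


noncomputable section

/-- The underlying space ℂ³ of the ω-Lie algebra A_α. -/
abbrev V3 : Type := Fin 3 → ℂ

/-- The basis vector x = e₁. -/
def vx : V3 := ![1, 0, 0]

/-- The basis vector y = e₂. -/
def vy : V3 := ![0, 1, 0]

/-- The basis vector z = e₃. -/
def vz : V3 := ![0, 0, 1]

lemma v3_decomp (u : V3) : u = u 0 • vx + u 1 • vy + u 2 • vz := by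
  funext i; fin_cases i <;> simp [vx, vy, vz]

lemma bform (α : ℂ) (b : V3 →ₗ[ℂ] V3 →ₗ[ℂ] V3)
    (hskew : ∀ u v : V3, b u v = - b v u)
    (hxy : b vx vy = vx) (hxz : b vx vz = vx + vy) (hyz : b vy vz = vz + α • vx) :
    ∀ u v : V3, b u v =
      ![(u 0 * v 1 - u 1 * v 0) + (u 0 * v 2 - u 2 * v 0) + α * (u 1 * v 2 - u 2 * v 1),
        u 0 * v 2 - u 2 * v 0,
        u 1 * v 2 - u 2 * v 1] := by
  have h0 : ∀ u : V3, b u u = 0 := by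
    intro u
    have h := hskew u u
    have h2 : (2:ℂ) • b u u = 0 := by
      rw [two_smul]; nth_rewrite 1 [h]; exact neg_add_cancel _
    simpa using (smul_eq_zero.mp h2).resolve_left (by norm_num)
  have hyx : b vy vx = -vx := by rw [hskew, hxy]
  have hzx : b vz vx = -(vx + vy) := by rw [hskew, hxz]
  have hzy : b vz vy = -(vz + α • vx) := by rw [hskew, hyz]
  intro u v
  conv_lhs => rw [v3_decomp u, v3_decomp v]
  simp only [map_add, map_smul, LinearMap.add_apply, LinearMap.smul_apply,
    hxy, hxz, hyz, hyx, hzx, hzy, h0]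
  funext i
  fin_cases i <;> simp [vx, vy, vz] <;> ring

lemma jform (α : ℂ) (b : V3 →ₗ[ℂ] V3 →ₗ[ℂ] V3)
    (hb : ∀ u v : V3, b u v =
      ![(u 0 * v 1 - u 1 * v 0) + (u 0 * v 2 - u 2 * v 0) + α * (u 1 * v 2 - u 2 * v 1),
        u 0 * v 2 - u 2 * v 0,
        u 1 * v 2 - u 2 * v 1]) :
    ∀ u v w : V3, b (b u v) w + b (b v w) u + b (b w u) v
      = (-(u 1 * v 2 - u 2 * v 1)) • w + (-(v 1 * w 2 - v 2 * w 1)) • u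
        + (-(w 1 * u 2 - w 2 * u 1)) • v := by
  intro u v w
  simp only [hb]
  funext i
  fin_cases i <;> simp [Matrix.cons_val_zero, Matrix.cons_val_one] <;> ring

lemma aut_form (α : ℂ) (b : V3 →ₗ[ℂ] V3 →ₗ[ℂ] V3)
    (hxy : b vx vy = vx) (hxz : b vx vz = vx + vy) (hyz : b vy vz = vz + α • vx)
    (hb : ∀ u v : V3, b u v =
      ![(u 0 * v 1 - u 1 * v 0) + (u 0 * v 2 - u 2 * v 0) + α * (u 1 * v 2 - u 2 * v 1),
        u 0 * v 2 - u 2 * v 0,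
        u 1 * v 2 - u 2 * v 1])
    (σ : V3 ≃ₗ[ℂ] V3)
    (hσ : ∀ u v : V3, σ (b u v) = b (σ u) (σ v)) :
    ∃ d g : ℂ, ∀ v : V3, σ v = ![v 0 + d * v 1 + g * v 2, v 1 + d * v 2, v 2] := by
  have jf := jform α b hb
  -- The Jacobiator at (x,y,z) equals -x
  have hJ1 : b (b vx vy) vz + b (b vy vz) vx + b (b vz vx) vy = -vx := by
    rw [jf]; funext i; fin_cases i <;> simp [vx, vy, vz]
  have eσ : σ (-vx) = b (b (σ vx) (σ vy)) (σ vz) + b (b (σ vy) (σ vz)) (σ vx)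
      + b (b (σ vz) (σ vx)) (σ vy) := by
    rw [← hJ1]; simp only [map_add, hσ]
  rw [jf (σ vx) (σ vy) (σ vz)] at eσ
  have eσ2 : σ (-vx) = σ ((-(σ vx 1 * σ vy 2 - σ vx 2 * σ vy 1)) • vz
      + (-(σ vy 1 * σ vz 2 - σ vy 2 * σ vz 1)) • vx
      + (-(σ vz 1 * σ vx 2 - σ vz 2 * σ vx 1)) • vy) := by
    rw [eσ]; simp only [map_add, map_smul]
  have einj := σ.injective eσ2
  have vx0 : vx 0 = 1 := rfl
  have vx1 : vx 1 = 0 := rfl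
  have vx2 : vx 2 = 0 := rfl
  have vy0 : vy 0 = 0 := rfl
  have vy1 : vy 1 = 1 := rfl
  have vy2 : vy 2 = 0 := rfl
  have vz0 : vz 0 = 0 := rfl
  have vz1 : vz 1 = 0 := rfl
  have vz2 : vz 2 = 1 := rfl
  have W1 : σ vy 1 * σ vz 2 - σ vy 2 * σ vz 1 = 1 := by
    have t := congrFun einj 0
    simp only [Pi.add_apply, Pi.smul_apply, Pi.neg_apply, smul_eq_mul,
      vx0, vy0, vz0] at t
    linear_combination t
  have W2 : σ vz 1 * σ vx 2 - σ vz 2 * σ vx 1 = 0 := by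
    have t := congrFun einj 1
    simp only [Pi.add_apply, Pi.smul_apply, Pi.neg_apply, smul_eq_mul,
      vx1, vy1, vz1] at t
    linear_combination t
  have W3 : σ vx 1 * σ vy 2 - σ vx 2 * σ vy 1 = 0 := by
    have t := congrFun einj 2
    simp only [Pi.add_apply, Pi.smul_apply, Pi.neg_apply, smul_eq_mul,
      vx2, vy2, vz2] at t
    linear_combination t
  -- bracket equations
  have h1 : σ vx = b (σ vx) (σ vy) := by rw [← hσ, hxy]
  have h2 : σ vx + σ vy = b (σ vx) (σ vz) := by rw [← hσ, hxz, map_add]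
  have h3 : σ vz + α • σ vx = b (σ vy) (σ vz) := by
    rw [← hσ, hyz, map_add, map_smul]
  rw [hb] at h1 h2 h3
  have A1 := congrFun h1 1
  have A2 := congrFun h1 2
  have B1 := congrFun h2 1
  have B2 := congrFun h2 2
  have C1 := congrFun h3 1
  have C2 := congrFun h3 2
  simp only [Matrix.cons_val_one, Matrix.cons_val_two, Matrix.head_cons, Matrix.tail_cons,
    Pi.add_apply, Pi.smul_apply, smul_eq_mul] at A1 A2 B1 B2 C1 C2
  have ha2 : σ vx 2 = 0 := by linear_combination A2 + W3
  have hd2 : σ vy 2 = 0 := by linear_combination B2 - W2 - ha2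
  have hg2 : σ vz 2 = 1 := by linear_combination C2 + W1 - α * ha2
  have hd1 : σ vy 1 = 1 := by rw [hg2, hd2] at W1; simpa using W1
  have ha1 : σ vx 1 = 0 := by rw [hd2, ha2] at A1; simpa using A1
  have ha0 : σ vx 0 = 1 := by
    rw [ha1, hd1, hg2, ha2] at B1; simpa using B1.symm
  have hg1 : σ vz 1 = σ vy 0 := by
    rw [ha1, hg2, hd2] at C1; simpa using C1
  set d := σ vy 0 with hd
  set g := σ vz 0 with hg
  have sx : σ vx = vx := by
    nth_rewrite 1 [v3_decomp (σ vx)]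
    rw [ha0, ha1, ha2]; simp
  have sy : σ vy = d • vx + vy := by
    nth_rewrite 1 [v3_decomp (σ vy)]
    rw [hd1, hd2, ← hd]; simp
  have sz : σ vz = g • vx + d • vy + vz := by
    nth_rewrite 1 [v3_decomp (σ vz)]
    rw [hg1, hg2, ← hg]; simp
  refine ⟨d, g, fun v => ?_⟩
  conv_lhs => rw [v3_decomp v]
  rw [map_add, map_add, map_smul, map_smul, map_smul, sx, sy, sz]
  funext i
  fin_cases i <;> simp [vx, vy, vz] <;> ring

/-- The automorphism group of the ω-Lie algebra A_α (with `[x,y] = x`,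
`[x,z] = x + y`, `[y,z] = z + α•x`) is abelian: any two automorphisms commute. -/
theorem aut_A_alpha_abelian (α : ℂ)
    (b : V3 →ₗ[ℂ] V3 →ₗ[ℂ] V3)
    (hskew : ∀ u v : V3, b u v = - b v u)
    (hxy : b vx vy = vx) (hxz : b vx vz = vx + vy) (hyz : b vy vz = vz + α • vx)
    (σ σ' : V3 ≃ₗ[ℂ] V3)
    (hσ : ∀ u v : V3, σ (b u v) = b (σ u) (σ v))
    (hσ' : ∀ u v : V3, σ' (b u v) = b (σ' u) (σ' v)) :
    ∀ v : V3, σ (σ' v) = σ' (σ v) := by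
  have hb := bform α b hskew hxy hxz hyz
  obtain ⟨d, g, hf⟩ := aut_form α b hxy hxz hyz hb σ hσ
  obtain ⟨d', g', hf'⟩ := aut_form α b hxy hxz hyz hb σ' hσ'
  intro v
  rw [hf (σ' v), hf' (σ v), hf' v, hf v]
  funext i
  fin_cases i <;> simp <;> ring
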